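/- (3-SAT reduction, forward direction) Let a 3-SAT instance with variables x_1,…,x_n and clauses C_1,…,C_m be given, and let G' be the associated graph with root r adjacent to variable-gadget vertices 1,…,n (capacity 1 each), each i adjacent to literal vertices x_i and x̄_i (capacity m each), each clause vertex C_j (capacity 0) adjacent to its three literal vertices, and c_r = n. If there exists a subtree T = (U, F) of G' containing r with C_T(v) ≤ c_v for all v and |U| ≥ 1 + 2n + m, then for every i exactly one of x_i, x̄_i is in U, every clause vertex C_j is in U, and the assignment setting x_i true iff x_i ∈ U satisfies all clauses. -/
import Mathlib


open Finset

/-- A rooted tree on vertex type `V` with root `r`, encoded by a vertex set and a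
parent function: every non-root vertex has a parent in the tree, and iterating
the parent function reaches the root. -/
structure RTree (V : Type) [DecidableEq V] (r : V) where
  verts : Finset V
  root_mem : r ∈ verts
  parent : V → V
  parent_mem : ∀ v ∈ verts, v ≠ r → parent v ∈ verts
  reach : ∀ v ∈ verts, ∃ n : ℕ, parent^[n] v = r

/-- Number of children of `v` in the rooted tree `T`. -/
def RTree.children {V : Type} [DecidableEq V] {r : V} (T : RTree V r) (v : V) : ℕ :=
  (T.verts.filter fun w => w ≠ r ∧ T.parent w = v).card

/-- `T` is a subtree of the graph `G`: every parent-child pair is an edge of `G`. -/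
def RTree.inGraph {V : Type} [DecidableEq V] {r : V} (T : RTree V r) (G : SimpleGraph V) : Prop :=
  ∀ v ∈ T.verts, v ≠ r → G.Adj (T.parent v) v

/-- A bounded rooted-tree packing: `K` subtrees of `G` rooted at `r`, with the total
number of children of each vertex bounded by its capacity. -/
def isPacking {V : Type} [DecidableEq V] [Fintype V] {r : V} (G : SimpleGraph V) (c : V → ℕ)
    {K : ℕ} (T : Fin K → RTree V r) : Prop :=
  (∀ k, (T k).inGraph G) ∧ ∀ v : V, (∑ k, (T k).children v) ≤ c v

/-- The set of total spanned-vertex counts achievable by bounded rooted-tree packings. -/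
def packSums {V : Type} [DecidableEq V] [Fintype V] (G : SimpleGraph V) (c : V → ℕ) (r : V)
    (K : ℕ) : Set ℕ :=
  {S | ∃ T : Fin K → RTree V r, isPacking G c T ∧ S = ∑ k, (T k).verts.card}

/-- Vertices of the 3-SAT reduction graph: the root, variable-gadget vertices,
literal vertices (`lit i true` is `xᵢ`, `lit i false` is `x̄ᵢ`) and clause vertices. -/
inductive RVert (n m : ℕ) where
  | root : RVert n m
  | idx : Fin n → RVert n m
  | lit : Fin n → Bool → RVert n m
  | cls : Fin m → RVert n m
deriving DecidableEq

/-- The base adjacency relation of the reduction graph. `cl j l` is the `l`-th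
literal (variable index, polarity) of clause `j`. -/
def redAdj {n m : ℕ} (cl : Fin m → Fin 3 → Fin n × Bool) : RVert n m → RVert n m → Prop
  | RVert.root, RVert.idx _ => True
  | RVert.idx i, RVert.lit i' _ => i = i'
  | RVert.lit i b, RVert.cls j => ∃ l : Fin 3, cl j l = (i, b)
  | _, _ => False

/-- The 3-SAT reduction graph `G'`. -/
def redGraph {n m : ℕ} (cl : Fin m → Fin 3 → Fin n × Bool) : SimpleGraph (RVert n m) :=
  SimpleGraph.fromRel (redAdj cl)

/-- The capacity function of the reduction: `c_r = n`, `c_i = 1`,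
`c_{xᵢ} = c_{x̄ᵢ} = m`, `c_{C_j} = 0`. -/
def redCap {n m : ℕ} : RVert n m → ℕ
  | RVert.root => n
  | RVert.idx _ => 1
  | RVert.lit _ _ => m
  | RVert.cls _ => 0

section Aux

variable {n m : ℕ} {cl : Fin m → Fin 3 → Fin n × Bool}

/-- `RVert n m` is equivalent to a sum of standard finite types. -/
def rvEquiv (n m : ℕ) : RVert n m ≃ (Unit ⊕ Fin n ⊕ (Fin n × Bool) ⊕ Fin m) where
  toFun v := match v with
    | .root => .inl ()
    | .idx i => .inr (.inl i)
    | .lit i b => .inr (.inr (.inl (i, b)))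
    | .cls j => .inr (.inr (.inr j))
  invFun s := match s with
    | .inl _ => .root
    | .inr (.inl i) => .idx i
    | .inr (.inr (.inl (i, b))) => .lit i b
    | .inr (.inr (.inr j)) => .cls j
  left_inv v := by cases v <;> rfl
  right_inv s := by rcases s with _ | i | ⟨i, b⟩ | j <;> rfl

instance : Fintype (RVert n m) := Fintype.ofEquiv _ (rvEquiv n m).symm

lemma rvCard : Fintype.card (RVert n m) = 1 + 3 * n + m := by
  rw [Fintype.card_congr (rvEquiv n m)]
  simp [Fintype.card_sum]
  ring

lemma lit_parent (T : RTree (RVert n m) RVert.root)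
    (hg : T.inGraph (redGraph cl)) (hc : ∀ v, T.children v ≤ redCap v)
    {i : Fin n} {b : Bool} (h : RVert.lit i b ∈ T.verts) :
    T.parent (RVert.lit i b) = RVert.idx i := by
  have hadj := hg _ h (by simp)
  rw [redGraph, SimpleGraph.fromRel_adj] at hadj
  obtain ⟨hne, hr⟩ := hadj
  cases hp : T.parent (RVert.lit i b) with
  | root => rw [hp] at hr; simp [redAdj] at hr
  | idx i' =>
    rw [hp] at hr
    simp [redAdj] at hr
    rw [hr]
  | lit i' b' => rw [hp] at hr; simp [redAdj] at hr
  | cls j =>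
    exfalso
    have h1 : 0 < T.children (RVert.cls j) :=
      Finset.card_pos.mpr ⟨_, Finset.mem_filter.mpr ⟨h, by simp, hp⟩⟩
    have h2 := hc (RVert.cls j)
    simp [redCap] at h2
    omega

lemma lit_unique (T : RTree (RVert n m) RVert.root)
    (hg : T.inGraph (redGraph cl)) (hc : ∀ v, T.children v ≤ redCap v)
    {i : Fin n} (h1 : RVert.lit i true ∈ T.verts) (h0 : RVert.lit i false ∈ T.verts) :
    False := by
  have p1 := lit_parent T hg hc h1
  have p0 := lit_parent T hg hc h0
  have hlt : 1 < T.children (RVert.idx i) := by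
    apply Finset.one_lt_card.mpr
    exact ⟨_, Finset.mem_filter.mpr ⟨h1, by simp, p1⟩,
           _, Finset.mem_filter.mpr ⟨h0, by simp, p0⟩, by simp⟩
  have h2 := hc (RVert.idx i)
  simp [redCap] at h2
  omega

end Aux

/-- Forward direction of the 3-SAT reduction: from a capacity-respecting rooted subtree
of `G'` spanning at least `1 + 2n + m` vertices, exactly one of `xᵢ, x̄ᵢ` is spanned
for each `i`, every clause vertex is spanned, and setting `xᵢ` true iff `xᵢ` is
spanned satisfies every clause. -/
theorem reduction_forward (n m : ℕ) (cl : Fin m → Fin 3 → Fin n × Bool)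
    (T : RTree (RVert n m) RVert.root)
    (hg : T.inGraph (redGraph cl))
    (hc : ∀ v, T.children v ≤ redCap v)
    (hcard : 1 + 2 * n + m ≤ T.verts.card) :
    (∀ i : Fin n, Xor' (RVert.lit i true ∈ T.verts) (RVert.lit i false ∈ T.verts)) ∧
    (∀ j : Fin m, RVert.cls j ∈ T.verts) ∧
    (∀ j : Fin m, ∃ l : Fin 3,
      ((RVert.lit (cl j l).1 true ∈ T.verts) ↔ (cl j l).2 = true)) := by
  classical
  -- the "missing literal" map
  set g : Fin n → RVert n m := fun i =>
    if RVert.lit i true ∈ T.verts then RVert.lit i false else RVert.lit i true with hg_def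
  have hg_form : ∀ i, ∃ b : Bool, g i = RVert.lit i b := by
    intro i
    by_cases h : RVert.lit i true ∈ T.verts
    · exact ⟨false, by simp [hg_def, h]⟩
    · exact ⟨true, by simp [hg_def, h]⟩
  have hg_not : ∀ i, g i ∉ T.verts := by
    intro i
    by_cases h : RVert.lit i true ∈ T.verts
    · simp only [hg_def, if_pos h]
      intro h0
      exact lit_unique T hg hc h h0
    · simp only [hg_def, if_neg h]
      exact h
  have hg_inj : Function.Injective g := by
    intro i i' hii
    obtain ⟨b, hb⟩ := hg_form i
    obtain ⟨b', hb'⟩ := hg_form i'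
    rw [hb, hb'] at hii
    exact (RVert.lit.injEq _ _ _ _ ▸ hii).1
  have hdisj : Disjoint T.verts (Finset.image g Finset.univ) := by
    rw [Finset.disjoint_right]
    intro a ha
    obtain ⟨i, _, rfl⟩ := Finset.mem_image.mp ha
    exact hg_not i
  have hcardim : (Finset.image g Finset.univ).card = n := by
    rw [Finset.card_image_of_injective _ hg_inj, Finset.card_univ, Fintype.card_fin]
  have hunion : T.verts ∪ Finset.image g Finset.univ = Finset.univ := by
    apply Finset.eq_univ_of_card
    have hle := Finset.card_le_univ (T.verts ∪ Finset.image g Finset.univ)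
    rw [Finset.card_union_of_disjoint hdisj, hcardim] at hle ⊢
    rw [rvCard] at hle ⊢
    omega
  have hcover : ∀ v : RVert n m, v ∈ T.verts ∨ ∃ i, g i = v := by
    intro v
    have : v ∈ T.verts ∪ Finset.image g Finset.univ := hunion ▸ Finset.mem_univ v
    rcases Finset.mem_union.mp this with h | h
    · exact Or.inl h
    · obtain ⟨i, _, hi⟩ := Finset.mem_image.mp h
      exact Or.inr ⟨i, hi⟩
  -- exactly one literal per variable
  have hxor : ∀ i : Fin n, Xor' (RVert.lit i true ∈ T.verts) (RVert.lit i false ∈ T.verts) := by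
    intro i
    by_cases h : RVert.lit i true ∈ T.verts
    · exact Or.inl ⟨h, fun h0 => lit_unique T hg hc h h0⟩
    · refine Or.inr ⟨?_, h⟩
      rcases hcover (RVert.lit i false) with hf | ⟨i', hi'⟩
      · exact hf
      · exfalso
        obtain ⟨b, hb⟩ := hg_form i'
        rw [hb] at hi'
        injection hi' with h1 h2
        subst h1; subst h2
        have hgi : g i' = RVert.lit i' true := by simp [hg_def, h]
        rw [hgi] at hb
        simp at hb
  -- all clause vertices covered
  have hcls : ∀ j : Fin m, RVert.cls j ∈ T.verts := by
    intro j
    rcases hcover (RVert.cls j) with h | ⟨i, hi⟩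
    · exact h
    · exfalso
      obtain ⟨b, hb⟩ := hg_form i
      rw [hb] at hi
      exact absurd hi (by simp)
  refine ⟨hxor, hcls, ?_⟩
  intro j
  have hj := hcls j
  have hadj := hg _ hj (by simp)
  rw [redGraph, SimpleGraph.fromRel_adj] at hadj
  obtain ⟨hne, hr⟩ := hadj
  have hpm := T.parent_mem _ hj (by simp)
  cases hp : T.parent (RVert.cls j) with
  | root => rw [hp] at hr; simp [redAdj] at hr
  | idx i' => rw [hp] at hr; simp [redAdj] at hr
  | cls j' => rw [hp] at hr; simp [redAdj] at hr
  | lit i b =>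
    rw [hp] at hr hpm
    have hl : ∃ l : Fin 3, cl j l = (i, b) := by
      rcases hr with h | h
      · simpa [redAdj] using h
      · simp [redAdj] at h
    obtain ⟨l, hl⟩ := hl
    refine ⟨l, ?_⟩
    rw [hl]
    cases b with
    | true => simpa using hpm
    | false =>
      exact iff_of_false (fun ht => lit_unique T hg hc ht hpm) (by simp)
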